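/- arXiv:1407.3123 — 2 statements merged into one kernel-verified Lean document; each statement's English description precedes it below -/
import Mathlib

section
/- In an ordered budget game, the social welfare is a potential function for improvement steps: if a coalition C of players changes strategies from state (s,≺) to state (s',≺') (newly chosen tasks appended at the end of every resource order) and every player in C strictly increases her utility, then u(s',≺') > u(s,≺). In particular this holds for a single improving player (|C| = 1). -/
noncomputable section

open Finset

/-- A (standard) budget game: finitely many players `ι`, resources `ρ` and tasks `τ`.
Each resource has a positive budget, each task a nonnegative demand on every resource,
each task belongs to a unique player (`owner`), and each player has a nonempty finite
family of strategies, each strategy being a set of her own tasks. -/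
structure BudgetGame (ι ρ τ : Type*) [Fintype ι] [Fintype ρ] [Fintype τ]
    [DecidableEq ι] [DecidableEq τ] where
  budget : ρ → ℝ
  budget_pos : ∀ r, 0 < budget r
  demand : τ → ρ → ℝ
  demand_nonneg : ∀ t r, 0 ≤ demand t r
  owner : τ → ι
  strat : ι → Finset (Finset τ)
  strat_nonempty : ∀ i, (strat i).Nonempty
  strat_owned : ∀ i, ∀ A ∈ strat i, ∀ t ∈ A, owner t = i

namespace BudgetGame

variable {ι ρ τ : Type*} [Fintype ι] [Fintype ρ] [Fintype τ]
  [DecidableEq ι] [DecidableEq τ]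

/-- `s` is a strategy profile: player `i` plays a strategy from her strategy set. -/
def Valid (G : BudgetGame ι ρ τ) (s : ι → Finset τ) : Prop :=
  ∀ i, s i ∈ G.strat i

/-- Total demand `D_r(s)` of the chosen tasks on resource `r`. -/
def totalDemand (G : BudgetGame ι ρ τ) (s : ι → Finset τ) (r : ρ) : ℝ :=
  ∑ i, ∑ t ∈ s i, G.demand t r

/-- Standard (proportional) utility `u_{t,r}(s) = min(t(r), b_r·t(r)/D_r(s))`
of a chosen task `t` from resource `r`. -/
def stdTaskUtil (G : BudgetGame ι ρ τ) (s : ι → Finset τ) (t : τ) (r : ρ) : ℝ :=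
  min (G.demand t r) (G.budget r * G.demand t r / G.totalDemand s r)

/-- Utility of player `i` in the standard budget game. -/
def stdUtil (G : BudgetGame ι ρ τ) (s : ι → Finset τ) (i : ι) : ℝ :=
  ∑ t ∈ s i, ∑ r, G.stdTaskUtil s t r

/-- Social welfare in the standard budget game. -/
def stdWelfare (G : BudgetGame ι ρ τ) (s : ι → Finset τ) : ℝ :=
  ∑ i, G.stdUtil s i

/-- Pure Nash equilibrium of the standard budget game. -/
def stdNE (G : BudgetGame ι ρ τ) (s : ι → Finset τ) : Prop :=
  G.Valid s ∧ ∀ i, ∀ a ∈ G.strat i,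
    G.stdUtil (Function.update s i a) i ≤ G.stdUtil s i

/-- An ordering vector `≺ = (≺_r)_r` is encoded by injective rank functions:
`t' ≺_r t` iff `ord r t' < ord r t`. -/
def InjOrd (ord : ρ → τ → ℕ) : Prop :=
  ∀ r, Function.Injective (ord r)

/-- Total demand on `r` of the chosen tasks that come strictly before `t` in `≺_r`. -/
def prefixDemand (G : BudgetGame ι ρ τ) (s : ι → Finset τ) (ord : ρ → τ → ℕ)
    (t : τ) (r : ρ) : ℝ :=
  ∑ i, ∑ t' ∈ (s i).filter (fun t' => ord r t' < ord r t), G.demand t' r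

/-- Ordered utility `u_{t,r}(s,≺) = min(t(r), max(0, b_r − Σ_{t' ≺_r t chosen} t'(r)))`. -/
def ordTaskUtil (G : BudgetGame ι ρ τ) (s : ι → Finset τ) (ord : ρ → τ → ℕ)
    (t : τ) (r : ρ) : ℝ :=
  min (G.demand t r) (max 0 (G.budget r - G.prefixDemand s ord t r))

/-- Utility of player `i` in the ordered budget game. -/
def ordUtil (G : BudgetGame ι ρ τ) (s : ι → Finset τ) (ord : ρ → τ → ℕ) (i : ι) : ℝ :=
  ∑ t ∈ s i, ∑ r, G.ordTaskUtil s ord t r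

/-- Social welfare in the ordered budget game. -/
def ordWelfare (G : BudgetGame ι ρ τ) (s : ι → Finset τ) (ord : ρ → τ → ℕ) : ℝ :=
  ∑ i, G.ordUtil s ord i

/-- `ord'` arises from `ord` by appending the tasks of `newT` at the end of every
resource order: it is injective per resource, keeps the relative order of all tasks
not in `newT`, and places every task of `newT` after all of them. -/
def IsReorder (ord ord' : ρ → τ → ℕ) (newT : Finset τ) : Prop :=
  InjOrd ord' ∧
  (∀ (r : ρ), ∀ x ∉ newT, ∀ y ∉ newT, (ord' r x < ord' r y ↔ ord r x < ord r y)) ∧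
  (∀ (r : ρ), ∀ x ∉ newT, ∀ t ∈ newT, ord' r x < ord' r t)

/-- The tasks newly chosen when coalition `C` deviates from `s` to `s'`. -/
def newTasks (C : Finset ι) (s s' : ι → Finset τ) : Finset τ :=
  C.biUnion fun i => s' i \ s i

/-- Pure Nash equilibrium of the ordered budget game: no unilateral deviation
(with the deviator's new tasks appended at the end of every resource order)
strictly increases the deviator's utility. -/
def ordNE (G : BudgetGame ι ρ τ) (s : ι → Finset τ) (ord : ρ → τ → ℕ) : Prop :=
  G.Valid s ∧ InjOrd ord ∧
  ∀ i, ∀ a ∈ G.strat i, ∀ ord' : ρ → τ → ℕ, IsReorder ord ord' (a \ s i) →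
    G.ordUtil (Function.update s i a) ord' i ≤ G.ordUtil s ord i

/-- Strong equilibrium: no coalition can deviate (new tasks appended) so that
every member strictly improves. -/
def IsStrongEq (G : BudgetGame ι ρ τ) (s : ι → Finset τ) (ord : ρ → τ → ℕ) : Prop :=
  G.Valid s ∧ InjOrd ord ∧
  ¬ ∃ (C : Finset ι) (s' : ι → Finset τ) (ord' : ρ → τ → ℕ),
      C.Nonempty ∧ G.Valid s' ∧ (∀ j ∉ C, s' j = s j) ∧
      IsReorder ord ord' (newTasks C s s') ∧
      ∀ i ∈ C, G.ordUtil s ord i < G.ordUtil s' ord' i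

/-- Super strong equilibrium: no coalition can deviate (new tasks appended) so that
every member weakly improves and at least one member strictly improves. -/
def IsSuperStrongEq (G : BudgetGame ι ρ τ) (s : ι → Finset τ) (ord : ρ → τ → ℕ) : Prop :=
  G.Valid s ∧ InjOrd ord ∧
  ¬ ∃ (C : Finset ι) (s' : ι → Finset τ) (ord' : ρ → τ → ℕ),
      C.Nonempty ∧ G.Valid s' ∧ (∀ j ∉ C, s' j = s j) ∧
      IsReorder ord ord' (newTasks C s s') ∧
      (∀ i ∈ C, G.ordUtil s ord i ≤ G.ordUtil s' ord' i) ∧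
      (∃ i ∈ C, G.ordUtil s ord i < G.ordUtil s' ord' i)

end BudgetGame

/-!
Appending the newly chosen tasks at the end of every resource order can only shrink the set of
chosen predecessors of a task that was chosen before: dropped tasks disappear and new tasks come
last. Hence every old task weakly gains utility. Players outside the coalition hold only old
tasks, so they weakly gain, while the coalition members gain strictly by assumption.
-/

namespace BudgetGame

theorem mem_of_mem_of_notMem_newTasks {ι τ : Type*} [DecidableEq τ] {C : Finset ι}
    {s s' : ι → Finset τ} (hfix : ∀ j ∉ C, s' j = s j) {i : ι} {t : τ}
    (ht : t ∈ s' i) (hnew : t ∉ newTasks C s s') : t ∈ s i := by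
  by_cases hi : i ∈ C
  · by_contra hts
    exact hnew (mem_biUnion.2 ⟨i, hi, mem_sdiff.2 ⟨ht, hts⟩⟩)
  · rwa [hfix i hi] at ht

variable {ι ρ τ : Type*} [Fintype ι] [Fintype ρ] [Fintype τ] [DecidableEq ι] [DecidableEq τ]
  {G : BudgetGame ι ρ τ} {s s' : ι → Finset τ} {ord ord' : ρ → τ → ℕ} {C : Finset ι}

theorem owner_eq_of_mem (hs : G.Valid s) {i : ι} {t : τ} (ht : t ∈ s i) : G.owner t = i :=
  G.strat_owned i (s i) (hs i) t ht

theorem owner_mem_of_mem_newTasks (hs' : G.Valid s') {t : τ} (ht : t ∈ newTasks C s s') :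
    G.owner t ∈ C := by
  obtain ⟨i, hi, hti⟩ := mem_biUnion.1 ht
  rwa [owner_eq_of_mem hs' (mem_sdiff.1 hti).1]

theorem prefixDemand_le_of_isReorder (hfix : ∀ j ∉ C, s' j = s j)
    (hre : IsReorder ord ord' (newTasks C s s')) {t : τ} (ht : t ∉ newTasks C s s') (r : ρ) :
    G.prefixDemand s' ord' t r ≤ G.prefixDemand s ord t r := by
  refine sum_le_sum fun i _ => sum_le_sum_of_subset_of_nonneg ?_ fun t' _ _ =>
    G.demand_nonneg t' r
  intro t' ht'
  obtain ⟨ht'i, hlt⟩ := mem_filter.1 ht'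
  have hold : t' ∉ newTasks C s s' := fun hnew => (hre.2.2 r t ht t' hnew).not_gt hlt
  exact mem_filter.2
    ⟨mem_of_mem_of_notMem_newTasks hfix ht'i hold, (hre.2.1 r t' hold t ht).1 hlt⟩

theorem ordTaskUtil_le_of_prefixDemand_le {t : τ} {r : ρ}
    (h : G.prefixDemand s' ord' t r ≤ G.prefixDemand s ord t r) :
    G.ordTaskUtil s ord t r ≤ G.ordTaskUtil s' ord' t r :=
  min_le_min le_rfl (max_le_max le_rfl (sub_le_sub_left h _))

theorem ordUtil_le_of_notMem (hs : G.Valid s) (hs' : G.Valid s') (hfix : ∀ j ∉ C, s' j = s j)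
    (hre : IsReorder ord ord' (newTasks C s s')) {j : ι} (hj : j ∉ C) :
    G.ordUtil s ord j ≤ G.ordUtil s' ord' j := by
  unfold ordUtil
  rw [hfix j hj]
  refine sum_le_sum fun t ht => sum_le_sum fun r _ => ?_
  have hold : t ∉ newTasks C s s' := fun hnew => by
    simpa [owner_eq_of_mem hs ht, hj] using owner_mem_of_mem_newTasks hs' hnew
  exact ordTaskUtil_le_of_prefixDemand_le (prefixDemand_le_of_isReorder hfix hre hold r)

end BudgetGame

open BudgetGame in
theorem stmt_8_general {ι ρ τ : Type*} [Fintype ι] [Fintype ρ] [Fintype τ]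
    [DecidableEq ι] [DecidableEq τ]
    (G : BudgetGame ι ρ τ) (s s' : ι → Finset τ) (ord ord' : ρ → τ → ℕ)
    (C : Finset ι) (hC : C.Nonempty)
    (hs : G.Valid s) (hs' : G.Valid s')
    (hfix : ∀ j ∉ C, s' j = s j)
    (hre : IsReorder ord ord' (newTasks C s s'))
    (himp : ∀ i ∈ C, G.ordUtil s ord i < G.ordUtil s' ord' i) :
    G.ordWelfare s ord < G.ordWelfare s' ord' := by
  obtain ⟨i₀, hi₀⟩ := hC
  refine sum_lt_sum (fun i _ => ?_) ⟨i₀, mem_univ i₀, himp i₀ hi₀⟩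
  by_cases hi : i ∈ C
  · exact (himp i hi).le
  · exact ordUtil_le_of_notMem hs hs' hfix hre hi

open BudgetGame in
/-- the social welfare of an ordered budget game is a potential function:
if a (nonempty) coalition `C` changes strategies (new tasks appended at the end of
every resource order) and every member strictly improves, the social welfare strictly
increases; in particular this holds for `|C| = 1`. -/
theorem stmt_8 {ι ρ τ : Type*} [Fintype ι] [Fintype ρ] [Fintype τ]
    [DecidableEq ι] [DecidableEq τ]
    (G : BudgetGame ι ρ τ) (s s' : ι → Finset τ) (ord ord' : ρ → τ → ℕ)
    (C : Finset ι) (hC : C.Nonempty)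
    (hs : G.Valid s) (hs' : G.Valid s') (hord : InjOrd ord)
    (hfix : ∀ j ∉ C, s' j = s j)
    (hre : IsReorder ord ord' (newTasks C s s'))
    (himp : ∀ i ∈ C, G.ordUtil s ord i < G.ordUtil s' ord' i) :
    G.ordWelfare s ord < G.ordWelfare s' ord' :=
  stmt_8_general G s s' ord ord' C hC hs hs' hfix hre himp

end
end

section
/- For every ordered budget game, the price of anarchy is at most 2: if (s,≺) is a pure Nash equilibrium, then every strategy profile s* satisfies u(s*) ≤ 2·u(s,≺), where the social welfare of s* may be computed with respect to any ordering since it is order-independent. -/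
noncomputable section

open Finset

/-!
On each resource the tasks fill the budget greedily, so whatever the orders, the welfare is
`∑ r, min b_r D_r`, with `D_r` the total demand. When player `i` deviates to `s*_i`, the others
keep at most `min b_r D₋ᵢ` on `r`, so she earns at least the marginal
`min b_r (D₋ᵢ + A_i) - min b_r D₋ᵢ` of her demand `A_i`; by concavity of `min b_r` this is at
least `min b_r (D + A_i) - min b_r D`. Since these marginals are subadditive, summing over the
players gives `u(s*) ≤ ∑ r, min b_r (D + D*) ≤ u(s) + u(s)`.
-/

lemma min_add_sub_min_le_of_le {b x y a : ℝ} (hxy : x ≤ y) (ha : 0 ≤ a) :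
    min b (y + a) - min b y ≤ min b (x + a) - min b x := by
  simp only [min_def]
  split_ifs <;> linarith

lemma min_add_sum_sub_min_le {κ : Type*} (b D : ℝ) (S : Finset κ) {A : κ → ℝ}
    (hA : ∀ k, 0 ≤ A k) :
    min b (D + ∑ k ∈ S, A k) - min b D ≤ ∑ k ∈ S, (min b (D + A k) - min b D) := by
  classical
  induction S using Finset.induction_on with
  | empty => simp
  | insert k S hkS ih =>
    have hS : D ≤ D + ∑ j ∈ S, A j := le_add_of_nonneg_right (sum_nonneg fun j _ => hA j)
    have := min_add_sub_min_le_of_le (b := b) hS (hA k)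
    rw [sum_insert hkS, sum_insert hkS, add_comm (A k), ← add_assoc]
    linarith

/-- Filling a budget `b` with the demands `d t` of the tasks of `S`, served in increasing order
of `f`, hands out exactly `min b (∑ t ∈ S, d t)` in total. -/
lemma sum_min_max_sub_prefix_eq_min {τ : Type*} [DecidableEq τ] {b : ℝ} (hb : 0 ≤ b)
    {d : τ → ℝ} (hd : ∀ t, 0 ≤ d t) {f : τ → ℕ} (hf : Function.Injective f) (S : Finset τ) :
    ∑ t ∈ S, min (d t) (max 0 (b - ∑ t' ∈ S.filter (fun t' => f t' < f t), d t'))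
      = min b (∑ t ∈ S, d t) := by
  induction S using Finset.induction_on_max_value f with
  | empty => simp [hb]
  | insert a S haS hmax ih =>
    have hlt : ∀ x ∈ S, f x < f a := fun x hx =>
      (hmax x hx).lt_of_ne fun h => haS (hf h ▸ hx)
    have hprefix_a : (insert a S).filter (fun t' => f t' < f a) = S := by
      ext x
      simp only [mem_filter, mem_insert]
      exact ⟨fun ⟨hx, hxa⟩ => hx.resolve_left (by rintro rfl; omega),
        fun hx => ⟨Or.inr hx, hlt x hx⟩⟩
    have hprefix : ∀ t ∈ S, (insert a S).filter (fun t' => f t' < f t)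
        = S.filter (fun t' => f t' < f t) := fun t ht => by
      rw [filter_insert, if_neg (not_lt.mpr (hmax t ht))]
    have hrest : ∑ t ∈ S,
        min (d t) (max 0 (b - ∑ t' ∈ (insert a S).filter (fun t' => f t' < f t), d t'))
        = min b (∑ t ∈ S, d t) := by
      rw [← ih]
      exact sum_congr rfl fun t ht => by rw [hprefix t ht]
    rw [sum_insert haS, sum_insert haS, hprefix_a, hrest, add_comm (d a)]
    have hsum := sum_nonneg fun t (_ : t ∈ S) => hd t
    have hda := hd a
    simp only [min_def, max_def]
    split_ifs <;> linarith

namespace BudgetGame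

lemma exists_isReorder {ρ τ : Type*} [Fintype τ] {ord : ρ → τ → ℕ} (hord : InjOrd ord)
    (newT : Finset τ) : ∃ ord', IsReorder ord ord' newT := by
  classical
  refine ⟨fun r t => if t ∈ newT then univ.sup (ord r) + 1 + ord r t else ord r t, ?_, ?_, ?_⟩
  · intro r x y h
    have hx' := le_sup (f := ord r) (mem_univ x)
    have hy' := le_sup (f := ord r) (mem_univ y)
    by_cases hx : x ∈ newT <;> by_cases hy : y ∈ newT <;> simp only [hx, hy, if_true, if_false] at h
    · exact hord r (by omega)
    · omega
    · omega
    · exact hord r h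
  · intro r x hx y hy
    simp [hx, hy]
  · intro r x hx t ht
    have := le_sup (f := ord r) (mem_univ x)
    simp only [if_neg hx, if_pos ht]
    omega

variable {ι ρ τ : Type*} [Fintype ι] [Fintype ρ] [Fintype τ] [DecidableEq ι] [DecidableEq τ]
  {G : BudgetGame ι ρ τ} {s : ι → Finset τ} {ord : ρ → τ → ℕ}

def othersDemand (G : BudgetGame ι ρ τ) (s : ι → Finset τ) (i : ι) (r : ρ) : ℝ :=
  ∑ j ∈ univ.erase i, ∑ t ∈ s j, G.demand t r

lemma Valid.update (hs : G.Valid s) {i : ι} {a : Finset τ} (ha : a ∈ G.strat i) :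
    G.Valid (Function.update s i a) := by
  intro j
  rcases eq_or_ne j i with rfl | hj
  · simpa using ha
  · simpa [hj] using hs j

lemma Valid.sum_biUnion (hs : G.Valid s) (g : τ → ℝ) :
    ∑ t ∈ univ.biUnion s, g t = ∑ i, ∑ t ∈ s i, g t := by
  refine Finset.sum_biUnion fun i _ j _ hij => disjoint_left.mpr fun t hti htj => hij ?_
  exact (G.strat_owned i _ (hs i) t hti).symm.trans (G.strat_owned j _ (hs j) t htj)

lemma ordTaskUtil_nonneg (s : ι → Finset τ) (ord : ρ → τ → ℕ) (t : τ) (r : ρ) :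
    0 ≤ G.ordTaskUtil s ord t r :=
  le_min (G.demand_nonneg t r) (le_max_left _ _)

lemma totalDemand_nonneg (s : ι → Finset τ) (r : ρ) : 0 ≤ G.totalDemand s r :=
  sum_nonneg fun _ _ => sum_nonneg fun t _ => G.demand_nonneg t r

lemma totalDemand_update (s : ι → Finset τ) (i : ι) (a : Finset τ) (r : ρ) :
    G.totalDemand (Function.update s i a) r = G.othersDemand s i r + ∑ t ∈ a, G.demand t r := by
  rw [totalDemand, ← add_sum_erase _ _ (mem_univ i), Function.update_self, add_comm, othersDemand]
  congr 1
  exact sum_congr rfl fun j hj => by rw [Function.update_of_ne (ne_of_mem_erase hj)]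

lemma othersDemand_update (s : ι → Finset τ) (i : ι) (a : Finset τ) (r : ρ) :
    G.othersDemand (Function.update s i a) i r = G.othersDemand s i r :=
  sum_congr rfl fun j hj => by rw [Function.update_of_ne (ne_of_mem_erase hj)]

lemma othersDemand_le_totalDemand (s : ι → Finset τ) (i : ι) (r : ρ) :
    G.othersDemand s i r ≤ G.totalDemand s r := by
  conv_rhs => rw [← Function.update_eq_self i s, totalDemand_update]
  exact le_add_of_nonneg_right (sum_nonneg fun t _ => G.demand_nonneg t r)

lemma sum_ordTaskUtil_eq_min (hs : G.Valid s) (hord : InjOrd ord) (r : ρ) :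
    ∑ i, ∑ t ∈ s i, G.ordTaskUtil s ord t r = min (G.budget r) (G.totalDemand s r) := by
  have hprefix : ∀ t, G.prefixDemand s ord t r
      = ∑ t' ∈ (univ.biUnion s).filter (fun t' => ord r t' < ord r t), G.demand t' r := by
    intro t
    simp only [prefixDemand, sum_filter]
    exact (hs.sum_biUnion _).symm
  rw [totalDemand, ← hs.sum_biUnion, ← hs.sum_biUnion, ← sum_min_max_sub_prefix_eq_min
    (G.budget_pos r).le (fun t => G.demand_nonneg t r) (hord r)]
  exact sum_congr rfl fun t _ => by rw [ordTaskUtil, hprefix]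

lemma sum_ordUtil_eq (s : ι → Finset τ) (ord : ρ → τ → ℕ) (P : Finset ι) :
    ∑ i ∈ P, G.ordUtil s ord i = ∑ r, ∑ i ∈ P, ∑ t ∈ s i, G.ordTaskUtil s ord t r := by
  simp only [ordUtil]
  rw [sum_congr rfl fun i _ => sum_comm, sum_comm]

theorem ordWelfare_eq (hs : G.Valid s) (hord : InjOrd ord) :
    G.ordWelfare s ord = ∑ r, min (G.budget r) (G.totalDemand s r) := by
  rw [ordWelfare, sum_ordUtil_eq]
  exact sum_congr rfl fun r _ => sum_ordTaskUtil_eq_min hs hord r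

lemma sum_erase_ordUtil_le (hs : G.Valid s) (hord : InjOrd ord) (i : ι) :
    ∑ j ∈ univ.erase i, G.ordUtil s ord j ≤ ∑ r, min (G.budget r) (G.othersDemand s i r) := by
  rw [sum_ordUtil_eq]
  refine sum_le_sum fun r _ => le_min ?_ ?_
  · calc ∑ j ∈ univ.erase i, ∑ t ∈ s j, G.ordTaskUtil s ord t r
        ≤ ∑ j, ∑ t ∈ s j, G.ordTaskUtil s ord t r :=
          sum_le_sum_of_subset_of_nonneg (subset_univ _)
            fun j _ _ => sum_nonneg fun t _ => ordTaskUtil_nonneg s ord t r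
      _ = min (G.budget r) (G.totalDemand s r) := sum_ordTaskUtil_eq_min hs hord r
      _ ≤ G.budget r := min_le_left _ _
  · exact sum_le_sum fun j _ => sum_le_sum fun t _ => min_le_left _ _

/-- After the deviation the welfare on `r` is `min b_r (others + new)`, of which the other
players together receive at most `min b_r others`. -/
lemma sum_marginal_le_ordUtil_update (hs : G.Valid s) {i : ι} {a : Finset τ}
    (ha : a ∈ G.strat i) {ord' : ρ → τ → ℕ} (hord' : InjOrd ord') :
    ∑ r, (min (G.budget r) (G.othersDemand s i r + ∑ t ∈ a, G.demand t r)
        - min (G.budget r) (G.othersDemand s i r))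
      ≤ G.ordUtil (Function.update s i a) ord' i := by
  have hs' := hs.update ha
  have hsplit := add_sum_erase univ (G.ordUtil (Function.update s i a) ord') (mem_univ i)
  have hothers := sum_erase_ordUtil_le hs' hord' i
  rw [← ordWelfare, ordWelfare_eq hs' hord'] at hsplit
  simp only [totalDemand_update, othersDemand_update] at hsplit hothers
  rw [sum_sub_distrib]
  linarith

lemma ordNE.sum_marginal_le_ordUtil (hNE : G.ordNE s ord) {i : ι} {a : Finset τ}
    (ha : a ∈ G.strat i) :
    ∑ r, (min (G.budget r) (G.totalDemand s r + ∑ t ∈ a, G.demand t r)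
        - min (G.budget r) (G.totalDemand s r))
      ≤ G.ordUtil s ord i := by
  obtain ⟨ord', hord'⟩ := exists_isReorder hNE.2.1 (a \ s i)
  calc _ ≤ ∑ r, (min (G.budget r) (G.othersDemand s i r + ∑ t ∈ a, G.demand t r)
          - min (G.budget r) (G.othersDemand s i r)) :=
        sum_le_sum fun r _ => min_add_sub_min_le_of_le (othersDemand_le_totalDemand s i r)
          (sum_nonneg fun t _ => G.demand_nonneg t r)
    _ ≤ G.ordUtil (Function.update s i a) ord' i :=
        sum_marginal_le_ordUtil_update hNE.1 ha hord'.1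
    _ ≤ G.ordUtil s ord i := hNE.2.2 i a ha ord' hord'

/-- Smoothness: by subadditivity of marginals the joint marginal of `s'` is at most the sum of
the individual ones, each bounded by the corresponding player's equilibrium utility. -/
lemma ordNE.sum_marginal_le_ordWelfare (hNE : G.ordNE s ord) {s' : ι → Finset τ}
    (hs' : G.Valid s') :
    ∑ r, (min (G.budget r) (G.totalDemand s r + G.totalDemand s' r)
        - min (G.budget r) (G.totalDemand s r))
      ≤ G.ordWelfare s ord :=
  calc _ ≤ ∑ r, ∑ i, (min (G.budget r) (G.totalDemand s r + ∑ t ∈ s' i, G.demand t r)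
          - min (G.budget r) (G.totalDemand s r)) :=
        sum_le_sum fun r _ => min_add_sum_sub_min_le _ _ _
          fun _ => sum_nonneg fun t _ => G.demand_nonneg t r
    _ = ∑ i, ∑ r, (min (G.budget r) (G.totalDemand s r + ∑ t ∈ s' i, G.demand t r)
          - min (G.budget r) (G.totalDemand s r)) := sum_comm
    _ ≤ G.ordWelfare s ord := sum_le_sum fun i _ => hNE.sum_marginal_le_ordUtil (hs' i)

end BudgetGame

open BudgetGame in
/-- for every ordered budget game the price of anarchy is at most `2`:
if `(s,≺)` is a pure Nash equilibrium then every strategy profile `s*` satisfies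
`u(s*) ≤ 2·u(s,≺)` (the welfare of `s*` being computed with respect to any ordering,
as it is order-independent). -/
theorem stmt_13 {ι ρ τ : Type*} [Fintype ι] [Fintype ρ] [Fintype τ]
    [DecidableEq ι] [DecidableEq τ]
    (G : BudgetGame ι ρ τ) (s : ι → Finset τ) (ord : ρ → τ → ℕ)
    (hNE : G.ordNE s ord)
    (sstar : ι → Finset τ) (hstar : G.Valid sstar) :
    ∀ ordstar : ρ → τ → ℕ, InjOrd ordstar →
      G.ordWelfare sstar ordstar ≤ 2 * G.ordWelfare s ord := by
  intro ordstar hordstar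
  have hmarginal := hNE.sum_marginal_le_ordWelfare hstar
  have hmono : ∑ r, min (G.budget r) (G.totalDemand sstar r)
      ≤ ∑ r, min (G.budget r) (G.totalDemand s r + G.totalDemand sstar r) :=
    sum_le_sum fun r _ => min_le_min le_rfl (le_add_of_nonneg_left (totalDemand_nonneg s r))
  rw [ordWelfare_eq hstar hordstar]
  rw [sum_sub_distrib, ← ordWelfare_eq hNE.1 hNE.2.1] at hmarginal
  linarith

end
end
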